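/- arXiv:2404.06161 — 7 statements merged into one kernel-verified Lean document; each statement's English description precedes it below -/
import Mathlib

section
/- Fundamental inequality: Let H be a real symmetric n×n matrix (n ≥ 2) and v ∈ ℝⁿ a unit vector. With Δ∞ᴺ = ⟨v, Hv⟩ and Δ_T = tr(H) − Δ∞ᴺ, one has |H|² ≥ 2(|Hv|² − (Δ∞ᴺ)²) + (Δ_T)²/(n−1) + (Δ∞ᴺ)². -/
/-- Fundamental inequality: for a symmetric n×n matrix `H` (n ≥ 2) and a unit
vector `v`, `|H|² ≥ 2(|Hv|² − (Δ∞ᴺ)²) + (Δ_T)²/(n−1) + (Δ∞ᴺ)²`. -/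
theorem stmt2 (n : ℕ) (hn : 2 ≤ n) (H : Matrix (Fin n) (Fin n) ℝ) (hH : H.IsSymm)
    (v : Fin n → ℝ) (hv : ∑ i, (v i) ^ 2 = 1) :
    ∑ i, ∑ j, (H i j) ^ 2 ≥
      2 * ((∑ i, (H.mulVec v i) ^ 2) - (∑ i, v i * H.mulVec v i) ^ 2)
        + (H.trace - ∑ i, v i * H.mulVec v i) ^ 2 / ((n : ℝ) - 1)
        + (∑ i, v i * H.mulVec v i) ^ 2 := by
  set w : Fin n → ℝ := H.mulVec v with hwdef
  have hsym : ∀ i j, H j i = H i j := fun i j => by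
    have := congrFun (congrFun hH i) j
    simpa [Matrix.transpose_apply] using this
  have hw : ∀ i, w i = ∑ j, H i j * v j := fun i => by
    simp [hwdef, Matrix.mulVec, dotProduct]
  have hcol : ∀ j, ∑ i, H i j * v i = w j := fun j => by
    rw [hw j]; exact Finset.sum_congr rfl fun i _ => by rw [hsym j i]
  set a : ℝ := ∑ i, v i * w i with hadef
  set W : ℝ := ∑ i, w i ^ 2 with hWdef
  set z : Fin n → ℝ := H.mulVec w with hzdef
  have hz : ∀ i, z i = ∑ j, H i j * w j := fun i => by
    simp [hzdef, Matrix.mulVec, dotProduct]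
  have hvz : ∑ i, v i * z i = W := by
    have : ∑ i, v i * z i = ∑ i, ∑ j, H i j * w j * v i := by
      refine Finset.sum_congr rfl fun i _ => ?_
      rw [hz i, Finset.mul_sum]
      exact Finset.sum_congr rfl fun j _ => by ring
    rw [this, Finset.sum_comm]
    rw [hWdef]
    refine Finset.sum_congr rfl fun j _ => ?_
    have : ∑ i, H i j * w j * v i = (∑ i, H i j * v i) * w j := by
      rw [Finset.sum_mul]; exact Finset.sum_congr rfl fun i _ => by ring
    rw [this, hcol j]; ring
  set B : Fin n → Fin n → ℝ := fun i j => H i j - v i * w j - w i * v j + a * (v i * v j)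
    with hBdef
  -- row sums of B squared
  have row : ∀ i, ∑ j, B i j ^ 2 =
      (∑ j, H i j ^ 2) - 2 * (v i * z i) - w i ^ 2 + 2 * a * (v i * w i)
        + v i ^ 2 * W - a ^ 2 * v i ^ 2 := by
    intro i
    have expand : ∀ j, B i j ^ 2 =
        H i j ^ 2 - 2 * v i * (H i j * w j) - 2 * w i * (H i j * v j)
          + 2 * (a * v i) * (H i j * v j)
          + v i ^ 2 * w j ^ 2 + w i ^ 2 * v j ^ 2 + (a ^ 2 * v i ^ 2) * v j ^ 2
          + (2 * (v i * w i)) * (v j * w j) - (2 * a * v i ^ 2) * (v j * w j)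
          - (2 * a * (v i * w i)) * v j ^ 2 := fun j => by simp only [hBdef]; ring
    rw [Finset.sum_congr rfl fun j _ => expand j]
    have hvw : ∑ j, v j * w j = a := hadef.symm
    simp only [Finset.sum_add_distrib, Finset.sum_sub_distrib, ← Finset.mul_sum,
      hv, hvw, hWdef.symm]
    rw [← hz i, ← hw i]
    ring
  set T : ℝ := ∑ i, ∑ j, H i j ^ 2 with hTdef
  set SB : ℝ := ∑ i, ∑ j, B i j ^ 2 with hSBdef
  have stepA : SB = T - 2 * W + a ^ 2 := by
    rw [hSBdef, Finset.sum_congr rfl fun i _ => row i]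
    simp only [Finset.sum_add_distrib, Finset.sum_sub_distrib, ← Finset.mul_sum,
      ← Finset.sum_mul]
    have h1 : ∑ i, v i * z i = W := hvz
    have h2 : ∑ i, v i * w i = a := hadef.symm
    have h3 : ∑ i, v i ^ 2 = 1 := hv
    rw [← hTdef, ← hWdef] at *
    -- sums: ∑ v i * z i etc
    rw [h1, h2, h3]
    ring
  -- trace of B
  have htrB : ∑ i, B i i = H.trace - a := by
    simp only [hBdef]
    simp only [Finset.sum_add_distrib, Finset.sum_sub_distrib, ← Finset.mul_sum]
    have h2 : ∑ i, v i * w i = a := hadef.symm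
    have h2' : ∑ i, w i * v i = a := by rw [← h2]; exact Finset.sum_congr rfl fun i _ => by ring
    have h3 : ∑ i, v i * v i = 1 := by rw [← hv]; exact Finset.sum_congr rfl fun i _ => (sq (v i)).symm
    rw [h2, h2', h3, Matrix.trace]
    simp [Matrix.diag]
  -- Bv = 0
  have hBv : ∀ i, ∑ j, B i j * v j = 0 := by
    intro i
    simp only [hBdef]
    have e : ∀ j, (H i j - v i * w j - w i * v j + a * (v i * v j)) * v j =
        H i j * v j - v i * (v j * w j) - w i * v j ^ 2 + (a * v i) * v j ^ 2 := fun j => by ring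
    rw [Finset.sum_congr rfl fun j _ => e j]
    simp only [Finset.sum_add_distrib, Finset.sum_sub_distrib, ← Finset.mul_sum, hv,
      hadef.symm, ← hw i]
    ring
  -- Cauchy-Schwarz with Q i j = δ_ij - v i v j
  set Q : Fin n → Fin n → ℝ := fun i j => (if i = j then (1:ℝ) else 0) - v i * v j with hQdef
  have hQB : ∑ p : Fin n × Fin n, Q p.1 p.2 * B p.1 p.2 = H.trace - a := by
    rw [Fintype.sum_prod_type]
    have e : ∀ i, ∑ j, Q i j * B i j =
        B i i - v i * ∑ j, B i j * v j := by
      intro i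
      simp only [hQdef]
      have : ∀ j, ((if i = j then (1:ℝ) else 0) - v i * v j) * B i j =
          (if i = j then B i j else 0) - v i * (B i j * v j) := fun j => by
        by_cases h : i = j <;> simp [h] <;> ring
      rw [Finset.sum_congr rfl fun j _ => this j]
      rw [Finset.sum_sub_distrib, Finset.sum_ite_eq Finset.univ i (fun j => B i j)]
      simp [Finset.mul_sum]
    rw [Finset.sum_congr rfl fun i _ => e i]
    simp only [Finset.sum_sub_distrib]
    rw [htrB]
    have : ∑ i, v i * ∑ j, B i j * v j = 0 := by
      rw [Finset.sum_congr rfl fun i _ => by rw [hBv i]]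
      simp
    rw [this]; ring
  have hQQ : ∑ p : Fin n × Fin n, Q p.1 p.2 ^ 2 = (n : ℝ) - 1 := by
    rw [Fintype.sum_prod_type]
    have e : ∀ i, ∑ j, Q i j ^ 2 = 1 - 2 * v i ^ 2 + v i ^ 2 := by
      intro i
      simp only [hQdef]
      have : ∀ j, ((if i = j then (1:ℝ) else 0) - v i * v j) ^ 2 =
          (if i = j then (1 - 2 * (v i * v j)) else 0) + v i ^ 2 * v j ^ 2 := fun j => by
        by_cases h : i = j <;> simp [h] <;> ring
      rw [Finset.sum_congr rfl fun j _ => this j]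
      rw [Finset.sum_add_distrib, Finset.sum_ite_eq Finset.univ i, ← Finset.mul_sum, hv]
      simp
      ring
    rw [Finset.sum_congr rfl fun i _ => e i]
    simp only [Finset.sum_add_distrib, Finset.sum_sub_distrib, ← Finset.mul_sum, hv]
    simp [Finset.card_univ]
    ring
  have hSBprod : ∑ p : Fin n × Fin n, B p.1 p.2 ^ 2 = SB := by
    rw [Fintype.sum_prod_type, hSBdef]
  have stepB : (H.trace - a) ^ 2 ≤ ((n : ℝ) - 1) * SB := by
    have cs := Finset.sum_mul_sq_le_sq_mul_sq Finset.univ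
      (fun p : Fin n × Fin n => Q p.1 p.2) (fun p => B p.1 p.2)
    rw [hQB, hQQ, hSBprod] at cs
    exact cs
  have hn1 : (0:ℝ) < (n : ℝ) - 1 := by
    have : (2:ℝ) ≤ (n:ℝ) := by exact_mod_cast hn
    linarith
  have hdiv : (H.trace - a) ^ 2 / ((n : ℝ) - 1) ≤ SB := by
    rw [div_le_iff₀ hn1]
    linarith [stepB]
  linarith [stepA, hdiv]
end

section
/- Hidden divergence structure 1 (pointwise identity): Let u : ℝⁿ → ℝ be a C³ function, α ∈ ℝ and ε > 0. Then pointwise div((|Du|² + ε)^{α/2}(D²u · Du − (Δu)·Du)) = (|Du|² + ε)^{α/2}·( |D²u|² − (Δu)² + α(|D²u·Du|²/(|Du|²+ε) − Δu·Δ∞u/(|Du|²+ε)) ), where Δ∞u = ⟨Du, D²u·Du⟩. -/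
open Real

/-- The (spatial) divergence of a vector field on `ℝⁿ`. -/
noncomputable def vdiv {n : ℕ} (F : EuclideanSpace ℝ (Fin n) → EuclideanSpace ℝ (Fin n))
    (x : EuclideanSpace ℝ (Fin n)) : ℝ :=
  ∑ i, fderiv ℝ F x (EuclideanSpace.single i 1) i

open scoped RealInnerProductSpace

private lemma sum_split {n : ℕ} (A B C D E : Fin n → ℝ) :
    ∑ i, (A i + (B i - C i) - D i + E i)
      = (∑ i, A i) + ((∑ i, B i) - ∑ i, C i) - (∑ i, D i) + ∑ i, E i := by
  rw [Finset.sum_add_distrib, Finset.sum_sub_distrib, Finset.sum_add_distrib,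
    Finset.sum_sub_distrib]

set_option maxHeartbeats 1000000 in
/-- Hidden divergence structure 1 (pointwise identity): for a `C³` function `u`,
`ε > 0` and `α ∈ ℝ`,
`div((|Du|²+ε)^{α/2}(D²u·Du − Δu·Du))
  = (|Du|²+ε)^{α/2}(|D²u|² − (Δu)² + α(|D²u·Du|²/(|Du|²+ε) − Δu·Δ∞u/(|Du|²+ε)))`,
where `D²u` is the Hessian `fderiv ℝ (gradient u)`, `Δu = tr D²u`,
`Δ∞u = ⟨Du, D²u Du⟩` and `|D²u|²` is the squared Frobenius norm. -/
theorem stmt4 {n : ℕ} (u : EuclideanSpace ℝ (Fin n) → ℝ) (hu : ContDiff ℝ 3 u)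
    (ε α : ℝ) (hε : 0 < ε) (x : EuclideanSpace ℝ (Fin n)) :
    vdiv (fun y => ((‖gradient u y‖ ^ 2 + ε) ^ (α / 2) : ℝ) •
        (fderiv ℝ (gradient u) y (gradient u y) - vdiv (gradient u) y • gradient u y)) x =
      (‖gradient u x‖ ^ 2 + ε) ^ (α / 2) *
        ((∑ i, ‖fderiv ℝ (gradient u) x (EuclideanSpace.single i 1)‖ ^ 2)
          - (vdiv (gradient u) x) ^ 2
          + α * (‖fderiv ℝ (gradient u) x (gradient u x)‖ ^ 2 / (‖gradient u x‖ ^ 2 + ε)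
              - vdiv (gradient u) x *
                (inner ℝ (gradient u x) (fderiv ℝ (gradient u) x (gradient u x)) : ℝ)
                  / (‖gradient u x‖ ^ 2 + ε))) := by
  classical
  have hg : ContDiff ℝ 2 (gradient u) := by
    have h1 : ContDiff ℝ 2 (fderiv ℝ u) := hu.fderiv_right (by norm_num)
    exact ((InnerProductSpace.toDual ℝ
      (EuclideanSpace ℝ (Fin n))).symm.toLinearIsometry.toContinuousLinearMap.contDiff).comp h1
  have hgd : Differentiable ℝ (gradient u) := hg.differentiable (by norm_num)
  have hH1 : ContDiff ℝ 1 (fun y => fderiv ℝ (gradient u) y) := hg.fderiv_right (by norm_num)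
  have hHd : DifferentiableAt ℝ (fun y => fderiv ℝ (gradient u) y) x :=
    (hH1.differentiable one_ne_zero) x
  -- notation
  set e : Fin n → EuclideanSpace ℝ (Fin n) := fun i => EuclideanSpace.single i 1 with he
  set a : EuclideanSpace ℝ (Fin n) := gradient u x with ha
  set Hx : EuclideanSpace ℝ (Fin n) →L[ℝ] EuclideanSpace ℝ (Fin n) :=
    fderiv ℝ (gradient u) x with hHx
  set K := fderiv ℝ (fun y => fderiv ℝ (gradient u) y) x with hK
  set d : ℝ := vdiv (gradient u) x with hd
  set s : ℝ := ‖a‖ ^ 2 + ε with hs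
  have hspos : 0 < s := by positivity
  -- symmetry of second derivative of the gradient (third derivatives of u)
  have Ksym : ∀ v w, K v w = K w v :=
    (hg.contDiffAt (x := x)).isSymmSndFDerivAt (by norm_num)
  have hA : HasFDerivAt (gradient u) Hx x := (hgd x).hasFDerivAt
  -- symmetry of the Hessian
  have Hsym : ∀ v w, ⟪Hx v, w⟫ = ⟪Hx w, v⟫ := by
    have husym := (hu.contDiffAt (x := x)).isSymmSndFDerivAt (by norm_num)
    have hud : Differentiable ℝ (fderiv ℝ u) :=
      (hu.fderiv_right (m := 2) (by norm_num)).differentiable (by norm_num)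
    have key : ∀ w v, (⟪Hx v, w⟫ : ℝ) = fderiv ℝ (fderiv ℝ u) x v w := by
      intro w v
      have h1 : HasFDerivAt (fun y => fderiv ℝ u y w)
          ((ContinuousLinearMap.apply ℝ ℝ w).comp (fderiv ℝ (fderiv ℝ u) x)) x :=
        (ContinuousLinearMap.apply ℝ ℝ w).hasFDerivAt.comp x (hud x).hasFDerivAt
      have hfun : ∀ y, (innerSL ℝ w) (gradient u y) = fderiv ℝ u y w := by
        intro y
        rw [innerSL_apply_apply, real_inner_comm]
        exact InnerProductSpace.toDual_symm_apply
      have h2 : HasFDerivAt (fun y => fderiv ℝ u y w) ((innerSL ℝ w).comp Hx) x := by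
        have h3 : HasFDerivAt (fun y => (innerSL ℝ w) (gradient u y))
            ((innerSL ℝ w).comp Hx) x := (innerSL ℝ w).hasFDerivAt.comp x hA
        simpa only [hfun] using h3
      have h4 := h1.unique h2
      calc (⟪Hx v, w⟫ : ℝ)
          = ⟪w, Hx v⟫ := real_inner_comm _ _
        _ = ((innerSL ℝ w).comp Hx) v := rfl
        _ = fderiv ℝ (fderiv ℝ u) x v w := by rw [← h4]; rfl
    intro v w
    rw [key w v, key v w, husym v w]
  -- basic derivative facts
  have hKd : HasFDerivAt (fun y => fderiv ℝ (gradient u) y) K x := hHd.hasFDerivAt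
  have hB : HasFDerivAt (fun y => fderiv ℝ (gradient u) y (gradient u y))
      (Hx.comp Hx + K.flip a) x := hKd.clm_apply hA
  -- derivative of the divergence of the gradient
  set D' : EuclideanSpace ℝ (Fin n) →L[ℝ] ℝ :=
    ∑ i, ((EuclideanSpace.proj i).comp
      (ContinuousLinearMap.apply ℝ (EuclideanSpace ℝ (Fin n)) (e i))).comp K with hD'
  have hDv : HasFDerivAt (fun y => vdiv (gradient u) y) D' x := by
    have h : ∀ i : Fin n, HasFDerivAt
        (fun y => ((EuclideanSpace.proj i).comp
          (ContinuousLinearMap.apply ℝ (EuclideanSpace ℝ (Fin n)) (e i)))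
            (fderiv ℝ (gradient u) y))
        (((EuclideanSpace.proj i).comp
          (ContinuousLinearMap.apply ℝ (EuclideanSpace ℝ (Fin n)) (e i))).comp K) x :=
      fun i => (((EuclideanSpace.proj i).comp
          (ContinuousLinearMap.apply ℝ (EuclideanSpace ℝ (Fin n)) (e i))).hasFDerivAt).comp x hKd
    exact HasFDerivAt.fun_sum (u := Finset.univ) (fun i _ => h i)
  -- derivative of the weight
  set q' : EuclideanSpace ℝ (Fin n) →L[ℝ] ℝ :=
    (fderivInnerCLM ℝ (a, a)).comp (Hx.prod Hx) with hq'
  have hq : HasFDerivAt (fun y => ‖gradient u y‖ ^ 2 + ε) q' x := by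
    have h0 : HasFDerivAt (fun y => (⟪gradient u y, gradient u y⟫ : ℝ)) q' x := hA.inner ℝ hA
    have h1 := h0.add_const ε
    have hfun : (fun y => ‖gradient u y‖ ^ 2 + ε)
        = fun y => (⟪gradient u y, gradient u y⟫ : ℝ) + ε := by
      funext y
      rw [real_inner_self_eq_norm_sq]
    rw [hfun]
    exact h1
  have hw : HasFDerivAt (fun y => (‖gradient u y‖ ^ 2 + ε) ^ (α / 2))
      ((α / 2 * s ^ (α / 2 - 1)) • q') x := hq.rpow_const (Or.inl hspos.ne')
  -- derivative of the vector part
  set V' : EuclideanSpace ℝ (Fin n) →L[ℝ] EuclideanSpace ℝ (Fin n) :=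
    (Hx.comp Hx + K.flip a) - (d • Hx + D'.smulRight a) with hV'
  have hV : HasFDerivAt (fun y =>
      fderiv ℝ (gradient u) y (gradient u y) - vdiv (gradient u) y • gradient u y) V' x :=
    hB.sub (hDv.smul hA)
  set F' : EuclideanSpace ℝ (Fin n) →L[ℝ] EuclideanSpace ℝ (Fin n) :=
    s ^ (α / 2) • V' + ((α / 2 * s ^ (α / 2 - 1)) • q').smulRight (Hx a - d • a) with hF'
  have hF : HasFDerivAt (fun y => ((‖gradient u y‖ ^ 2 + ε) ^ (α / 2) : ℝ) •
      (fderiv ℝ (gradient u) y (gradient u y) - vdiv (gradient u) y • gradient u y)) F' x :=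
    hw.smul hV
  -- compute the divergence
  have hvd : vdiv (fun y => ((‖gradient u y‖ ^ 2 + ε) ^ (α / 2) : ℝ) •
        (fderiv ℝ (gradient u) y (gradient u y) - vdiv (gradient u) y • gradient u y)) x
      = ∑ i, F' (e i) i := by
    show (∑ i, fderiv ℝ (fun y => ((‖gradient u y‖ ^ 2 + ε) ^ (α / 2) : ℝ) •
        (fderiv ℝ (gradient u) y (gradient u y) - vdiv (gradient u) y • gradient u y)) x
          (EuclideanSpace.single i 1) i) = _
    rw [hF.fderiv]
  rw [hvd]
  -- coordinates via inner products
  have coord : ∀ (v : EuclideanSpace ℝ (Fin n)) (i : Fin n), v i = ⟪v, e i⟫ := by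
    intro v i
    simp [he, EuclideanSpace.inner_single_right]
  have hbasis : ∀ v : EuclideanSpace ℝ (Fin n), ∑ j, v j • e j = v := by
    intro v
    have h := (EuclideanSpace.basisFun (Fin n) ℝ).sum_repr v
    simpa [he, EuclideanSpace.basisFun_apply, EuclideanSpace.basisFun_repr] using h
  -- pointwise evaluation of the derivative
  have heval : ∀ i : Fin n, F' (e i) i
      = s ^ (α / 2) * ((Hx (Hx (e i))) i + (K (e i)) a i
          - (d * (Hx (e i)) i + D' (e i) * a i))
        + (α / 2 * s ^ (α / 2 - 1)) * ((⟪a, Hx (e i)⟫ : ℝ) + ⟪Hx (e i), a⟫)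
            * ((Hx a) i - d * a i) := by
    intro i
    rw [hF', hV', hq']
    simp only [ContinuousLinearMap.add_apply, ContinuousLinearMap.coe_sub', Pi.sub_apply,
      ContinuousLinearMap.smul_apply, ContinuousLinearMap.comp_apply,
      ContinuousLinearMap.flip_apply, ContinuousLinearMap.smulRight_apply,
      ContinuousLinearMap.prod_apply, fderivInnerCLM_apply,
      PiLp.add_apply, PiLp.sub_apply, PiLp.smul_apply, smul_eq_mul]
    try ring
  -- Frobenius term
  have hii : ∀ i : Fin n, (Hx (Hx (e i))) i = ‖Hx (e i)‖ ^ 2 := by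
    intro i
    rw [coord (Hx (Hx (e i))) i, Hsym, real_inner_self_eq_norm_sq]
  -- the H(grad) coordinate
  have hWa : ∀ i : Fin n, (⟪a, Hx (e i)⟫ : ℝ) = (Hx a) i := by
    intro i
    rw [real_inner_comm, Hsym, ← coord]
  -- evaluation of D'
  have hD'eval : ∀ i : Fin n, D' (e i) = ∑ j, (⟪K (e i) (e j), e j⟫ : ℝ) := by
    intro i
    rw [hD']
    simp only [ContinuousLinearMap.sum_apply, ContinuousLinearMap.comp_apply,
      ContinuousLinearMap.apply_apply, PiLp.proj_apply]
    exact Finset.sum_congr rfl fun j _ => coord _ _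
  -- cancellation of the third-order terms
  have hKa : ∑ i, (K (e i)) a i = ∑ i, D' (e i) * a i := by
    have expand : ∀ i : Fin n, (K (e i)) a i = ∑ j, a j * (⟪K (e i) (e j), e i⟫ : ℝ) := by
      intro i
      conv_lhs => rw [coord ((K (e i)) a) i, ← hbasis a]
      rw [map_sum, sum_inner]
      exact Finset.sum_congr rfl fun j _ => by rw [map_smul, real_inner_smul_left]
    calc ∑ i, (K (e i)) a i
        = ∑ i, ∑ j, a j * (⟪K (e j) (e i), e i⟫ : ℝ) := by
          refine Finset.sum_congr rfl fun i _ => ?_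
          rw [expand i]
          exact Finset.sum_congr rfl fun j _ => by rw [Ksym]
      _ = ∑ j, ∑ i, a j * (⟪K (e j) (e i), e i⟫ : ℝ) := Finset.sum_comm
      _ = ∑ j, D' (e j) * a j := by
          refine Finset.sum_congr rfl fun j _ => ?_
          rw [hD'eval j, Finset.sum_mul]
          exact Finset.sum_congr rfl fun i _ => by ring
  -- trace term
  have htr : ∑ i, (Hx (e i)) i = d := rfl
  -- the weight-derivative term
  have hVsum : ∑ i, (Hx a) i * ((Hx a) i - d * a i) = ‖Hx a‖ ^ 2 - d * (⟪a, Hx a⟫ : ℝ) := by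
    have h1 : (‖Hx a‖ : ℝ) ^ 2 = ∑ i, (Hx a) i * (Hx a) i := by
      rw [← real_inner_self_eq_norm_sq]
      simp only [PiLp.inner_apply, RCLike.inner_apply, conj_trivial]
    have h2 : (⟪a, Hx a⟫ : ℝ) = ∑ i, a i * (Hx a) i := by
      simp [PiLp.inner_apply]
      exact Finset.sum_congr rfl fun i _ => mul_comm _ _
    rw [h1, h2, Finset.mul_sum, ← Finset.sum_sub_distrib]
    exact Finset.sum_congr rfl fun i _ => by ring
  have hpow : s ^ (α / 2 - 1) = s ^ (α / 2) / s := by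
    rw [Real.rpow_sub hspos, Real.rpow_one]
  -- assemble
  calc ∑ i, F' (e i) i
      = ∑ i, (s ^ (α / 2) * ‖Hx (e i)‖ ^ 2
          + (s ^ (α / 2) * ((K (e i)) a i) - s ^ (α / 2) * (D' (e i) * a i))
          - s ^ (α / 2) * d * ((Hx (e i)) i)
          + α * s ^ (α / 2 - 1) * ((Hx a) i * ((Hx a) i - d * a i))) := by
        refine Finset.sum_congr rfl fun i _ => ?_
        have h1 : (⟪Hx (e i), a⟫ : ℝ) = (Hx a) i := by
          rw [real_inner_comm]; exact hWa i
        rw [heval i, hii i, hWa i, h1]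
        ring
    _ = (∑ i, s ^ (α / 2) * ‖Hx (e i)‖ ^ 2)
          + ((∑ i, s ^ (α / 2) * ((K (e i)) a i)) - ∑ i, s ^ (α / 2) * (D' (e i) * a i))
          - (∑ i, s ^ (α / 2) * d * ((Hx (e i)) i))
          + ∑ i, α * s ^ (α / 2 - 1) * ((Hx a) i * ((Hx a) i - d * a i)) :=
        sum_split _ _ _ _ _
    _ = s ^ (α / 2) * (∑ i, ‖Hx (e i)‖ ^ 2)
          + (s ^ (α / 2) * (∑ i, (K (e i)) a i) - s ^ (α / 2) * (∑ i, D' (e i) * a i))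
          - s ^ (α / 2) * d * (∑ i, (Hx (e i)) i)
          + α * s ^ (α / 2 - 1) * (∑ i, (Hx a) i * ((Hx a) i - d * a i)) := by
        rw [← Finset.mul_sum, ← Finset.mul_sum, ← Finset.mul_sum, ← Finset.mul_sum,
          ← Finset.mul_sum]
    _ = s ^ (α / 2) * (∑ i, ‖Hx (e i)‖ ^ 2)
          - s ^ (α / 2) * d * d
          + α * s ^ (α / 2 - 1) * (‖Hx a‖ ^ 2 - d * (⟪a, Hx a⟫ : ℝ)) := by
        rw [hKa, htr, hVsum]; ring
    _ = s ^ (α / 2) * ((∑ i, ‖Hx (e i)‖ ^ 2) - d ^ 2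
          + α * (‖Hx a‖ ^ 2 / s - d * (⟪a, Hx a⟫ : ℝ) / s)) := by
        rw [hpow]
        field_simp
    _ = _ := by simp only [he]
end

section
/- Let p, γ, s be real numbers with p + s > 0, and for θ ∈ [0,1] set P_θ = (p−2)θ + 1, S_θ = 1 + sθ, K_θ = 1 + γθ. Define the 2×2 symmetric matrix M(θ, w₁) with entries m11 = p+s, m22 = (p+s)(P_θ + S_θ − K_θ)P_θ, and off-diagonal m12 = ((p+s)(2P_θ + S_θ − K_θ) − w₁(P_θ + S_θ))/2. Assume P_θ > 0 and P_θ + S_θ − K_θ > 0. Then det M(θ, w₁) > 0 if and only if w₁⁻(θ) < w₁ < w₁⁺(θ), where w₁^±(θ) = (p+s)/(P_θ+S_θ) · (√(P_θ + S_θ − K_θ) ± √(P_θ))². -/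
/-- With `P_θ = (p−2)θ+1`, `S_θ = 1+sθ`, `K_θ = 1+γθ`, the symmetric matrix
`M(θ,w₁)` with `m11 = p+s`, `m22 = (p+s)(P_θ+S_θ−K_θ)P_θ` and
`m12 = ((p+s)(2P_θ+S_θ−K_θ) − w₁(P_θ+S_θ))/2` has positive determinant iff
`w₁⁻(θ) < w₁ < w₁⁺(θ)` where
`w₁^±(θ) = (p+s)/(P_θ+S_θ)·(√(P_θ+S_θ−K_θ) ± √P_θ)²`. -/
theorem stmt9 (p γ s w₁ θ : ℝ) (hθ : θ ∈ Set.Icc (0 : ℝ) 1) (hps : 0 < p + s)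
    (hP : 0 < (p - 2) * θ + 1) (hPSK : 0 < (p - 2 + s - γ) * θ + 1) :
    (0 < (p + s) * ((p + s) * ((p - 2 + s - γ) * θ + 1) * ((p - 2) * θ + 1))
        - (((p + s) * (2 * ((p - 2) * θ + 1) + (1 + s * θ) - (1 + γ * θ))
            - w₁ * (((p - 2) * θ + 1) + (1 + s * θ))) / 2) ^ 2)
    ↔ ((p + s) / (((p - 2) * θ + 1) + (1 + s * θ))
          * (Real.sqrt ((p - 2 + s - γ) * θ + 1) - Real.sqrt ((p - 2) * θ + 1)) ^ 2 < w₁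
        ∧ w₁ < (p + s) / (((p - 2) * θ + 1) + (1 + s * θ))
          * (Real.sqrt ((p - 2 + s - γ) * θ + 1) + Real.sqrt ((p - 2) * θ + 1)) ^ 2) := by
  obtain ⟨hθ0, hθ1⟩ := hθ
  set P : ℝ := (p - 2) * θ + 1 with hPdef
  set D : ℝ := (p - 2 + s - γ) * θ + 1 with hDdef
  have hA : 0 < P + (1 + s * θ) := by
    have := mul_nonneg hps.le hθ0
    rw [hPdef]; nlinarith
  set A : ℝ := P + (1 + s * θ) with hAdef
  have hsD : Real.sqrt D ^ 2 = D := Real.sq_sqrt hPSK.le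
  have hsP : Real.sqrt P ^ 2 = P := Real.sq_sqrt hP.le
  have hsD0 : 0 ≤ Real.sqrt D := Real.sqrt_nonneg _
  have hsP0 : 0 ≤ Real.sqrt P := Real.sqrt_nonneg _
  have hDP' : D = P + (s - γ) * θ := by rw [hDdef, hPdef]; ring
  set x : ℝ := w₁ * A - (p + s) * (P + D) with hx
  set y : ℝ := 2 * (p + s) * (Real.sqrt D * Real.sqrt P) with hy
  have hy0 : 0 ≤ y := by positivity
  have hy2 : y ^ 2 = 4 * (p + s) ^ 2 * (D * P) := by
    rw [hy, mul_pow, mul_pow, mul_pow, hsD, hsP]; ring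
  have hrw : (p + s) * ((p + s) * D * P)
      - (((p + s) * (2 * P + (1 + s * θ) - (1 + γ * θ)) - w₁ * A) / 2) ^ 2
      = (y ^ 2 - x ^ 2) / 4 := by
    rw [hy2, hx, hAdef, hDP']; ring
  have hsub : (Real.sqrt D - Real.sqrt P) ^ 2 = D + P - 2 * (Real.sqrt D * Real.sqrt P) := by
    rw [sub_sq, hsD, hsP]; ring
  have hadd : (Real.sqrt D + Real.sqrt P) ^ 2 = D + P + 2 * (Real.sqrt D * Real.sqrt P) := by
    rw [add_sq, hsD, hsP]; ring
  have key : ∀ x : ℝ, ((p + s) / A * x < w₁ ↔ (p + s) * x < w₁ * A) := by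
    intro z
    rw [div_mul_eq_mul_div, div_lt_iff₀ hA]
  have key2 : ∀ x : ℝ, (w₁ < (p + s) / A * x ↔ w₁ * A < (p + s) * x) := by
    intro z
    rw [div_mul_eq_mul_div, lt_div_iff₀ hA]
  rw [hrw, key, key2, hsub, hadd]
  clear_value x y A
  constructor
  · intro h
    have hx2 : x ^ 2 < y ^ 2 := by linarith
    have habs : |x| < y := abs_lt_of_sq_lt_sq hx2 hy0
    rw [abs_lt] at habs
    constructor
    · linarith [habs.1, hx, hy]
    · linarith [habs.2, hx, hy]
  · rintro ⟨h1, h2⟩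
    have hl : -y < x := by linarith [hx, hy]
    have hr : x < y := by linarith [hx, hy]
    have : x ^ 2 < y ^ 2 := sq_lt_sq' hl hr
    linarith
end

section
/- With p > 1, γ > −1, s > γ + 1 − p, define w₁⁻(θ) = (p+s)(√((p−2+s−γ)θ+1) − √((p−2)θ+1))²/((p−2+s)θ+2) for θ ∈ [0,1]. Then sup_{θ∈[0,1]} w₁⁻(θ) = max{ w₁⁻(0), w₁⁻(1) } = (√(p−1+s−γ) − √(p−1))². (In particular w₁⁻(0) = 0.) -/
/-- The supremum of `w₁⁻` over `[0,1]` is attained at an endpoint and equals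
`(√(p−1+s−γ) − √(p−1))²`; moreover `w₁⁻(0) = 0`. -/
theorem stmt11 (p γ s : ℝ) (hp : 1 < p) (hγ : -1 < γ) (hs : γ + 1 - p < s) :
    let w₁m : ℝ → ℝ := fun θ =>
      (p + s) * (Real.sqrt ((p - 2 + s - γ) * θ + 1) - Real.sqrt ((p - 2) * θ + 1)) ^ 2
        / ((p - 2 + s) * θ + 2)
    (∀ θ ∈ Set.Icc (0 : ℝ) 1, w₁m θ ≤ max (w₁m 0) (w₁m 1)) ∧
    max (w₁m 0) (w₁m 1) = (Real.sqrt (p - 1 + s - γ) - Real.sqrt (p - 1)) ^ 2 ∧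
    w₁m 0 = 0 := by
  intro w₁m
  have hA : (0:ℝ) < p - 1 + s - γ := by linarith
  have hB : (0:ℝ) < p - 1 := by linarith
  have hps : (0:ℝ) < p + s := by linarith
  have h0 : w₁m 0 = 0 := by simp [w₁m]
  have h1 : w₁m 1 = (Real.sqrt (p - 1 + s - γ) - Real.sqrt (p - 1)) ^ 2 := by
    show (p + s) * (Real.sqrt ((p - 2 + s - γ) * 1 + 1) - Real.sqrt ((p - 2) * 1 + 1)) ^ 2
        / ((p - 2 + s) * 1 + 2) = _
    have e1 : (p - 2 + s - γ) * 1 + 1 = p - 1 + s - γ := by ring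
    have e2 : (p - 2) * 1 + 1 = p - 1 := by ring
    have e3 : (p - 2 + s) * 1 + 2 = p + s := by ring
    rw [e1, e2, e3, mul_comm, mul_div_assoc, div_self hps.ne', mul_one]
  have hmax : max (w₁m 0) (w₁m 1) = (Real.sqrt (p - 1 + s - γ) - Real.sqrt (p - 1)) ^ 2 := by
    rw [h0, h1, max_eq_right (sq_nonneg _)]
  refine ⟨?_, hmax, h0⟩
  intro θ hθ
  obtain ⟨hθ0, hθ1⟩ := hθ
  rw [hmax]
  set sA := Real.sqrt (p - 1 + s - γ) with hsAdef
  set sB := Real.sqrt (p - 1) with hsBdef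
  set a := (p - 2 + s - γ) * θ + 1 with hadef
  set b := (p - 2) * θ + 1 with hbdef
  set d := (p - 2 + s) * θ + 2 with hddef
  have haθ : θ * (p - 1 + s - γ) ≤ a := by
    have : a = θ * (p - 1 + s - γ) + (1 - θ) := by rw [hadef]; ring
    linarith
  have hbθ : θ * (p - 1) ≤ b := by
    have : b = θ * (p - 1) + (1 - θ) := by rw [hbdef]; ring
    linarith
  have ha : 0 ≤ a := le_trans (by positivity) haθ
  have hb : 0 ≤ b := le_trans (by positivity) hbθ
  have hd : 0 < d := by
    rw [hddef]
    nlinarith [mul_nonneg hθ0 hps.le, mul_nonneg (sub_nonneg.2 hθ1) hps.le]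
  set sa := Real.sqrt a with hsadef
  set sb := Real.sqrt b with hsbdef
  have hsa2 : sa ^ 2 = a := Real.sq_sqrt ha
  have hsb2 : sb ^ 2 = b := Real.sq_sqrt hb
  have hsA2 : sA ^ 2 = p - 1 + s - γ := Real.sq_sqrt hA.le
  have hsB2 : sB ^ 2 = p - 1 := Real.sq_sqrt hB.le
  have hsaθ : Real.sqrt θ * sA ≤ sa := by
    rw [← Real.sqrt_mul hθ0]
    exact Real.sqrt_le_sqrt haθ
  have hsbθ : Real.sqrt θ * sB ≤ sb := by
    rw [← Real.sqrt_mul hθ0]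
    exact Real.sqrt_le_sqrt hbθ
  have hu : 0 < sA + sB := by positivity
  have hv0 : 0 ≤ sa + sb := by positivity
  -- key inequality : (p+s) θ² (sA+sB)² ≤ d (sa+sb)²
  have hsq : (Real.sqrt θ * (sA + sB)) ^ 2 ≤ (sa + sb) ^ 2 := by
    apply pow_le_pow_left₀ (by positivity)
    calc Real.sqrt θ * (sA + sB) = Real.sqrt θ * sA + Real.sqrt θ * sB := by ring
    _ ≤ sa + sb := add_le_add hsaθ hsbθ
  have hθsq : (Real.sqrt θ * (sA + sB)) ^ 2 = θ * (sA + sB) ^ 2 := by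
    rw [mul_pow, Real.sq_sqrt hθ0]
  have hdθ : (p + s) * θ ≤ d := by rw [hddef]; nlinarith
  have key : (p + s) * θ * (θ * (sA + sB) ^ 2) ≤ d * (sa + sb) ^ 2 := by
    apply mul_le_mul hdθ (hθsq ▸ hsq) (by positivity) hd.le
  -- difference-of-squares identities
  have hv : (sa - sb) ^ 2 * (sa + sb) ^ 2 = ((s - γ) * θ) ^ 2 := by
    have h : (sa - sb) * (sa + sb) = (s - γ) * θ := by
      have : (sa - sb) * (sa + sb) = sa ^ 2 - sb ^ 2 := by ring
      rw [this, hsa2, hsb2, hadef, hbdef]; ring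
    calc (sa - sb) ^ 2 * (sa + sb) ^ 2 = ((sa - sb) * (sa + sb)) ^ 2 := by ring
    _ = ((s - γ) * θ) ^ 2 := by rw [h]
  have hU : (sA - sB) ^ 2 * (sA + sB) ^ 2 = (s - γ) ^ 2 := by
    have h : (sA - sB) * (sA + sB) = s - γ := by
      have : (sA - sB) * (sA + sB) = sA ^ 2 - sB ^ 2 := by ring
      rw [this, hsA2, hsB2]; ring
    calc (sA - sB) ^ 2 * (sA + sB) ^ 2 = ((sA - sB) * (sA + sB)) ^ 2 := by ring
    _ = (s - γ) ^ 2 := by rw [h]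
  -- conclude
  show (p + s) * (sa - sb) ^ 2 / d ≤ (sA - sB) ^ 2
  rw [div_le_iff₀ hd]
  have hsann : 0 ≤ sa := Real.sqrt_nonneg a
  have hsbnn : 0 ≤ sb := Real.sqrt_nonneg b
  clear h0 h1 hmax
  clear_value w₁m sA sB a b d sa sb
  clear w₁m hsAdef hsBdef hadef hbdef hddef hsadef hsbdef
  clear haθ hbθ ha hb hsaθ hsbθ hsq hθsq hdθ hsa2 hsb2 hsA2 hsB2
  rcases eq_or_lt_of_le hv0 with hv0' | hv0'
  · -- sa + sb = 0 forces sa = sb = 0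
    have hsa0 : sa = 0 := by linarith
    have hsb0 : sb = 0 := by linarith
    rw [hsa0, hsb0]
    have h : (0:ℝ) ≤ (sA - sB) ^ 2 * d := by positivity
    nlinarith
  · have hmul : (0:ℝ) < (sA + sB) ^ 2 * (sa + sb) ^ 2 := by positivity
    apply le_of_mul_le_mul_right _ hmul
    have e1 : (p + s) * (sa - sb) ^ 2 * ((sA + sB) ^ 2 * (sa + sb) ^ 2)
        = (s - γ) ^ 2 * ((p + s) * θ * (θ * (sA + sB) ^ 2)) := by
      linear_combination ((p + s) * (sA + sB) ^ 2) * hv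
    have e2 : (sA - sB) ^ 2 * d * ((sA + sB) ^ 2 * (sa + sb) ^ 2)
        = (s - γ) ^ 2 * (d * (sa + sb) ^ 2) := by
      linear_combination (d * (sa + sb) ^ 2) * hU
    rw [e1, e2]
    exact mul_le_mul_of_nonneg_left key (sq_nonneg _)
end

section
/- With p > 1, γ > −1, s > γ + 1 − p, define w₁⁺(θ) = (p+s)(√((p−2+s−γ)θ+1) + √((p−2)θ+1))²/((p−2+s)θ+2) for θ ∈ [0,1]. Then inf_{θ∈[0,1]} w₁⁺(θ) = min{ 2(p+s), (√(p−1+s−γ) + √(p−1))² }. (Note w₁⁺(0) = 2(p+s) and w₁⁺(1) = (√(p−1+s−γ) + √(p−1))², and any interior critical value is at least 2(p+s).) -/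
/-- An affine function `(c-1)*θ+1` with `c > 0` is positive on `[0,1]`. -/
lemma aff_pos_aux {c θ : ℝ} (hc : 0 < c) (h0 : 0 ≤ θ) (h1 : θ ≤ 1) :
    0 < (c - 1) * θ + 1 := by
  rcases le_total c 1 with h | h
  · nlinarith [mul_nonneg (sub_nonneg.2 h1) (sub_nonneg.2 h)]
  · nlinarith [mul_nonneg h0 (sub_nonneg.2 h)]

/-- The infimum of `w₁⁺` over `[0,1]` equals `min{2(p+s), (√(p−1+s−γ)+√(p−1))²}`,
with `w₁⁺(0) = 2(p+s)` and `w₁⁺(1) = (√(p−1+s−γ)+√(p−1))²`. -/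
theorem stmt12 (p γ s : ℝ) (hp : 1 < p) (hγ : -1 < γ) (hs : γ + 1 - p < s) :
    let w₁p : ℝ → ℝ := fun θ =>
      (p + s) * (Real.sqrt ((p - 2 + s - γ) * θ + 1) + Real.sqrt ((p - 2) * θ + 1)) ^ 2
        / ((p - 2 + s) * θ + 2)
    (∀ θ ∈ Set.Icc (0 : ℝ) 1,
        w₁p θ ≥ min (2 * (p + s)) ((Real.sqrt (p - 1 + s - γ) + Real.sqrt (p - 1)) ^ 2)) ∧
    w₁p 0 = 2 * (p + s) ∧
    w₁p 1 = (Real.sqrt (p - 1 + s - γ) + Real.sqrt (p - 1)) ^ 2 := by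
  intro w₁p
  have hq : 0 < p + s := by linarith
  have hc1 : 0 < p - 1 + s - γ := by linarith
  have hc2 : 0 < p - 1 := by linarith
  have hX0 : 0 ≤ Real.sqrt (p - 1 + s - γ) := Real.sqrt_nonneg _
  have hY0 : 0 ≤ Real.sqrt (p - 1) := Real.sqrt_nonneg _
  have hX2 : Real.sqrt (p - 1 + s - γ) ^ 2 = p - 1 + s - γ := Real.sq_sqrt hc1.le
  have hY2 : Real.sqrt (p - 1) ^ 2 = p - 1 := Real.sq_sqrt hc2.le
  set X := Real.sqrt (p - 1 + s - γ)
  set Y := Real.sqrt (p - 1)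
  refine ⟨?_, ?_, ?_⟩
  · intro θ hθ
    obtain ⟨hθ0, hθ1⟩ := hθ
    have h1θ : 0 ≤ 1 - θ := by linarith
    have hA : 0 < (p - 2 + s - γ) * θ + 1 := by
      have := aff_pos_aux hc1 hθ0 hθ1; linarith [this]
    have hB : 0 < (p - 2) * θ + 1 := by
      have := aff_pos_aux hc2 hθ0 hθ1; linarith [this]
    have hD : 0 < (p - 2 + s) * θ + 2 := by
      have h := aff_pos_aux (c := (p + s) / 2) (by linarith) hθ0 hθ1
      nlinarith [h]
    have hx0 : 0 ≤ Real.sqrt ((p - 2 + s - γ) * θ + 1) := Real.sqrt_nonneg _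
    have hy0 : 0 ≤ Real.sqrt ((p - 2) * θ + 1) := Real.sqrt_nonneg _
    have hx2 : Real.sqrt ((p - 2 + s - γ) * θ + 1) ^ 2 = (p - 2 + s - γ) * θ + 1 :=
      Real.sq_sqrt hA.le
    have hy2 : Real.sqrt ((p - 2) * θ + 1) ^ 2 = (p - 2) * θ + 1 := Real.sq_sqrt hB.le
    set x := Real.sqrt ((p - 2 + s - γ) * θ + 1)
    set y := Real.sqrt ((p - 2) * θ + 1)
    -- chord inequality for the concave function √(A·B)
    have hchord : (1 - θ) + θ * (X * Y) ≤ x * y := by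
      have hxy : x * y = Real.sqrt (((p - 2 + s - γ) * θ + 1) * ((p - 2) * θ + 1)) :=
        (Real.sqrt_mul hA.le _).symm
      have hrhs : 0 ≤ (1 - θ) + θ * (X * Y) := by positivity
      have hsq : ((1 - θ) + θ * (X * Y)) ^ 2 ≤
          ((p - 2 + s - γ) * θ + 1) * ((p - 2) * θ + 1) := by
        have eA : (p - 2 + s - γ) * θ + 1 = (1 - θ) + θ * X ^ 2 := by rw [hX2]; ring
        have eB : (p - 2) * θ + 1 = (1 - θ) + θ * Y ^ 2 := by rw [hY2]; ring
        rw [eA, eB]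
        nlinarith [mul_nonneg (mul_nonneg hθ0 h1θ) (sq_nonneg (X - Y))]
      calc (1 - θ) + θ * (X * Y) = Real.sqrt (((1 - θ) + θ * (X * Y)) ^ 2) :=
            (Real.sqrt_sq hrhs).symm
        _ ≤ Real.sqrt (((p - 2 + s - γ) * θ + 1) * ((p - 2) * θ + 1)) :=
            Real.sqrt_le_sqrt hsq
        _ = x * y := hxy.symm
    have hθX2 : θ * X ^ 2 = θ * (p - 1 + s - γ) := by rw [hX2]
    have hθY2 : θ * Y ^ 2 = θ * (p - 1) := by rw [hY2]
    have hT : (X + Y) ^ 2 = (p - 1 + s - γ) + (p - 1) + 2 * (X * Y) := by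
      rw [add_sq, hX2, hY2]; ring
    have hxyT : (x + y) ^ 2
        = ((p - 2 + s - γ) * θ + 1) + ((p - 2) * θ + 1) + 2 * (x * y) := by
      rw [add_sq, hx2, hy2]; ring
    have hG : 2 * (p + s) * ((1 - θ) + θ * (X * Y)) ≤ 2 * (p + s) * (x * y) :=
      mul_le_mul_of_nonneg_left hchord (by positivity)
    show (p + s) * (x + y) ^ 2 / ((p - 2 + s) * θ + 2) ≥ _
    rw [ge_iff_le, le_div_iff₀ hD, hxyT]
    rcases le_total (2 * (p + s)) ((X + Y) ^ 2) with hcase | hcase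
    · rw [min_eq_left hcase]
      rw [hT] at hcase
      have hint : 0 ≤ θ * (p + s) * ((p - 1 + s - γ) + (p - 1) + 2 * (X * Y)
          - 2 * (p + s)) :=
        mul_nonneg (mul_nonneg hθ0 hq.le) (sub_nonneg.2 hcase)
      nlinarith [hG, hint]
    · rw [min_eq_right hcase, hT]
      rw [hT] at hcase
      have h' : 2 * (X * Y) ≤ s + γ + 2 := by linarith
      nlinarith [hG, mul_nonneg h1θ (sub_nonneg.2 h')]
  · show (p + s) * (Real.sqrt ((p - 2 + s - γ) * 0 + 1) + Real.sqrt ((p - 2) * 0 + 1)) ^ 2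
        / ((p - 2 + s) * 0 + 2) = 2 * (p + s)
    rw [show (p - 2 + s - γ) * 0 + 1 = 1 by ring, show (p - 2) * 0 + 1 = 1 by ring,
      Real.sqrt_one]
    ring
  · show (p + s) * (Real.sqrt ((p - 2 + s - γ) * 1 + 1) + Real.sqrt ((p - 2) * 1 + 1)) ^ 2
        / ((p - 2 + s) * 1 + 2) = (X + Y) ^ 2
    rw [show (p - 2 + s - γ) * 1 + 1 = p - 1 + s - γ by ring,
      show (p - 2) * 1 + 1 = p - 1 by ring, show (p - 2 + s) * 1 + 2 = p + s by ring]
    exact mul_div_cancel_left₀ _ hq.ne'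
end

section
/- If p > 1, γ > −1, γ+1−p < s ≤ −2−γ, and s > 2p−4−γ−2√(2(p−1)(p−2−γ)), then 2(p+s) > (√(p−1+s−γ) − √(p−1))². -/
/-- If `p > 1`, `γ > −1`, `γ+1−p < s ≤ −2−γ` and
`s > 2p−4−γ−2√(2(p−1)(p−2−γ))`, then `2(p+s) > (√(p−1+s−γ) − √(p−1))²`. -/
theorem stmt15 (p γ s : ℝ) (hp : 1 < p) (hγ : -1 < γ) (hs1 : γ + 1 - p < s)
    (hs2 : s ≤ -2 - γ)
    (hs3 : 2 * p - 4 - γ - 2 * Real.sqrt (2 * (p - 1) * (p - 2 - γ)) < s) :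
    2 * (p + s) > (Real.sqrt (p - 1 + s - γ) - Real.sqrt (p - 1)) ^ 2 := by
  set u := Real.sqrt (p - 1 + s - γ) with hu
  set v := Real.sqrt (p - 1) with hv
  set q := Real.sqrt (2 * (p - 1) * (p - 2 - γ)) with hq
  have hp1 : (0:ℝ) < p - 1 := by linarith
  have ha : (0:ℝ) < p - 1 + s - γ := by linarith
  have hpg : (0:ℝ) < p - 2 - γ := by linarith
  have hu2 : u ^ 2 = p - 1 + s - γ := Real.sq_sqrt ha.le
  have hv2 : v ^ 2 = p - 1 := Real.sq_sqrt hp1.le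
  have hq2 : q ^ 2 = 2 * (p - 1) * (p - 2 - γ) := Real.sq_sqrt (by positivity)
  have hu0 : 0 ≤ u := Real.sqrt_nonneg _
  have hv0 : 0 ≤ v := Real.sqrt_nonneg _
  have hq0 : 0 ≤ q := Real.sqrt_nonneg _
  have ht : 0 ≤ -(s + γ + 2) := by linarith
  have ht0 : -(s + γ + 2) < 2 * q - 2 * (p - 1) := by linarith
  have h1 : (s + γ + 2) ^ 2 < (2 * q - 2 * (p - 1)) ^ 2 := by nlinarith
  have h2 : (2 * q - 2 * (p - 1)) ^ 2 < 4 * u ^ 2 * v ^ 2 := by nlinarith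
  have h3 : -(s + γ + 2) < 2 * (u * v) := by
    nlinarith [mul_nonneg hu0 hv0, h1, h2, sq_nonneg (2 * (u * v) + (s + γ + 2))]
  nlinarith [h3, hu2, hv2]
end

section
/- Gradient chain-rule norm identity: For a C² function u : ℝⁿ → ℝ, ε > 0 and exponent q ∈ ℝ, at every point the Jacobian of the map x ↦ (|Du|²+ε)^{q/2}·Du satisfies |D((|Du|²+ε)^{q/2}Du)|² = (|Du|²+ε)^{q}( |D²u|² + (2q + q²·θ)·|D²u·Du|²/(|Du|²+ε) ) where θ = |Du|²/(|Du|²+ε). In particular, when q ≥ 0, |D((|Du|²+ε)^{q/2}Du)|² ≥ (|Du|²+ε)^q |D²u|². -/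
set_option maxHeartbeats 1000000


open Real
open RealInnerProductSpace

/-- Gradient chain-rule norm identity: for a `C²` function `u : ℝⁿ → ℝ`, `ε > 0`
and `q ∈ ℝ`, the Jacobian of `F : x ↦ (|Du|²+ε)^{q/2} Du` satisfies, with
`θ = |Du|²/(|Du|²+ε)`,
`|DF|² = (|Du|²+ε)^q(|D²u|² + (2q + q²θ)|D²u·Du|²/(|Du|²+ε))`;
in particular `|DF|² ≥ (|Du|²+ε)^q |D²u|²` when `q ≥ 0`. Here `|·|²` denotes
squared Frobenius norms. -/
theorem stmt19 {n : ℕ} (u : EuclideanSpace ℝ (Fin n) → ℝ) (hu : ContDiff ℝ 2 u)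
    (ε q : ℝ) (hε : 0 < ε) (x : EuclideanSpace ℝ (Fin n)) :
    (∑ i, ‖fderiv ℝ (fun y => ((‖gradient u y‖ ^ 2 + ε) ^ (q / 2) : ℝ) • gradient u y) x
        (EuclideanSpace.single i 1)‖ ^ 2) =
      (‖gradient u x‖ ^ 2 + ε) ^ q *
        ((∑ i, ‖fderiv ℝ (gradient u) x (EuclideanSpace.single i 1)‖ ^ 2)
          + (2 * q + q ^ 2 * (‖gradient u x‖ ^ 2 / (‖gradient u x‖ ^ 2 + ε))) *
            ‖fderiv ℝ (gradient u) x (gradient u x)‖ ^ 2 / (‖gradient u x‖ ^ 2 + ε))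
    ∧ (0 ≤ q →
      (∑ i, ‖fderiv ℝ (fun y => ((‖gradient u y‖ ^ 2 + ε) ^ (q / 2) : ℝ) • gradient u y) x
          (EuclideanSpace.single i 1)‖ ^ 2) ≥
        (‖gradient u x‖ ^ 2 + ε) ^ q *
          ∑ i, ‖fderiv ℝ (gradient u) x (EuclideanSpace.single i 1)‖ ^ 2) := by
  have hf' : ContDiff ℝ 1 (fderiv ℝ u) := hu.fderiv_right (by norm_num)
  set e' : StrongDual ℝ (EuclideanSpace ℝ (Fin n)) →L[ℝ] EuclideanSpace ℝ (Fin n) :=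
    { toFun := (InnerProductSpace.toDual ℝ (EuclideanSpace ℝ (Fin n))).symm
      map_add' := fun a b => map_add _ a b
      map_smul' := fun r a => by
        simpa using map_smulₛₗ (InnerProductSpace.toDual ℝ (EuclideanSpace ℝ (Fin n))).symm r a
      cont := (InnerProductSpace.toDual ℝ (EuclideanSpace ℝ (Fin n))).symm.continuous } with he'
  have hNeq : gradient u = fun y => e' (fderiv ℝ u y) := rfl
  have hf''d : DifferentiableAt ℝ (fderiv ℝ u) x := (hf'.differentiable one_ne_zero) x
  set f'' := fderiv ℝ (fderiv ℝ u) x with hf''def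
  set H : EuclideanSpace ℝ (Fin n) →L[ℝ] EuclideanSpace ℝ (Fin n) := e'.comp f'' with hHdef
  have hNH : HasFDerivAt (gradient u) H x := by
    rw [hNeq]; exact e'.hasFDerivAt.comp x hf''d.hasFDerivAt
  have hHf : fderiv ℝ (gradient u) x = H := hNH.fderiv
  have hsym : ∀ v w : EuclideanSpace ℝ (Fin n), f'' v w = f'' w v :=
    second_derivative_symmetric (fun y => ((hu.differentiable (by norm_num)) y).hasFDerivAt)
      hf''d.hasFDerivAt
  have hinner : ∀ v w : EuclideanSpace ℝ (Fin n), ⟪H v, w⟫ = ⟪H w, v⟫ := by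
    intro v w
    have h1 : ⟪H v, w⟫ = f'' v w := by
      simp [hHdef, he', InnerProductSpace.toDual_symm_apply]
    have h2 : ⟪H w, v⟫ = f'' w v := by
      simp [hHdef, he', InnerProductSpace.toDual_symm_apply]
    rw [h1, h2, hsym]
  set Nx := gradient u x with hNx
  set s := ‖Nx‖ ^ 2 + ε with hs_def
  have hs : 0 < s := by positivity
  -- derivative of the squared norm plus ε
  set D : EuclideanSpace ℝ (Fin n) →L[ℝ] ℝ :=
    (fderivInnerCLM ℝ (Nx, Nx)).comp (H.prod H) with hDdef
  have hg : HasFDerivAt (fun y => ‖gradient u y‖ ^ 2 + ε) D x := by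
    have h := (hNH.inner ℝ hNH).add_const ε
    simpa only [real_inner_self_eq_norm_sq] using h
  have hD : ∀ v, D v = 2 * ⟪Nx, H v⟫ := by
    intro v
    simp [hDdef, fderivInnerCLM_apply, real_inner_comm (H v) Nx]
    ring
  have hφ : HasFDerivAt (fun y => (‖gradient u y‖ ^ 2 + ε) ^ (q / 2))
      ((q / 2 * s ^ (q / 2 - 1)) • D) x := hg.rpow_const (Or.inl hs.ne')
  have hF : HasFDerivAt
      (fun y => ((‖gradient u y‖ ^ 2 + ε) ^ (q / 2) : ℝ) • gradient u y)
      ((s ^ (q / 2)) • H + ((q / 2 * s ^ (q / 2 - 1)) • D).smulRight Nx) x := hφ.smul hNH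
  have hFv : ∀ v, fderiv ℝ
      (fun y => ((‖gradient u y‖ ^ 2 + ε) ^ (q / 2) : ℝ) • gradient u y) x v
      = (s ^ (q / 2)) • H v + ((q / 2 * s ^ (q / 2 - 1)) * D v) • Nx := by
    intro v
    rw [hF.fderiv]
    simp
  -- per-direction norm expansion
  have key : ∀ v : EuclideanSpace ℝ (Fin n),
      ‖fderiv ℝ (fun y => ((‖gradient u y‖ ^ 2 + ε) ^ (q / 2) : ℝ) • gradient u y) x v‖ ^ 2
      = (s ^ (q / 2)) ^ 2 * ‖H v‖ ^ 2
        + (2 * (s ^ (q / 2) * (q * s ^ (q / 2 - 1)))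
            + (q * s ^ (q / 2 - 1)) ^ 2 * ‖Nx‖ ^ 2) * ⟪Nx, H v⟫ ^ 2 := by
    intro v
    rw [hFv v, hD v, norm_add_sq_real, real_inner_smul_left, real_inner_smul_right]
    rw [real_inner_comm (H v) Nx]
    simp only [norm_smul, Real.norm_eq_abs, mul_pow, sq_abs]
    ring
  -- sum of squared inner products equals squared norm of H Nx
  have hM : (∑ i, ⟪Nx, H (EuclideanSpace.single i 1)⟫ ^ 2) = ‖H Nx‖ ^ 2 := by
    have ht : ∀ i, ⟪Nx, H (EuclideanSpace.single i 1)⟫ = H Nx i := by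
      intro i
      rw [real_inner_comm, hinner, EuclideanSpace.inner_single_right]
      simp
    simp_rw [ht]
    rw [EuclideanSpace.norm_eq, Real.sq_sqrt (by positivity)]
    simp [sq_abs]
  have hsum :
      (∑ i, ‖fderiv ℝ (fun y => ((‖gradient u y‖ ^ 2 + ε) ^ (q / 2) : ℝ) • gradient u y) x
        (EuclideanSpace.single i 1)‖ ^ 2)
      = (s ^ (q / 2)) ^ 2 * (∑ i, ‖H (EuclideanSpace.single i 1)‖ ^ 2)
        + (2 * (s ^ (q / 2) * (q * s ^ (q / 2 - 1)))
            + (q * s ^ (q / 2 - 1)) ^ 2 * ‖Nx‖ ^ 2) * ‖H Nx‖ ^ 2 := by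
    simp_rw [key]
    rw [Finset.sum_add_distrib, ← Finset.mul_sum, ← Finset.mul_sum, hM]
  -- rpow algebra
  have h1 : (s ^ (q / 2)) ^ 2 = s ^ q := by
    rw [← Real.rpow_natCast (s ^ (q / 2)) 2, ← Real.rpow_mul hs.le]
    norm_num
  have h2 : s ^ (q / 2) * s ^ (q / 2 - 1) = s ^ q / s := by
    rw [← Real.rpow_add hs, show q / 2 + (q / 2 - 1) = q - 1 by ring,
      Real.rpow_sub hs, Real.rpow_one]
  have h3 : (s ^ (q / 2 - 1)) ^ 2 = s ^ q / s ^ 2 := by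
    rw [← Real.rpow_natCast (s ^ (q / 2 - 1)) 2, ← Real.rpow_mul hs.le,
      show (q / 2 - 1) * (2 : ℕ) = q - 2 by push_cast; ring,
      Real.rpow_sub hs, ← Real.rpow_natCast s 2]
    norm_num
  have main :
      (∑ i, ‖fderiv ℝ (fun y => ((‖gradient u y‖ ^ 2 + ε) ^ (q / 2) : ℝ) • gradient u y) x
        (EuclideanSpace.single i 1)‖ ^ 2)
      = s ^ q *
        ((∑ i, ‖fderiv ℝ (gradient u) x (EuclideanSpace.single i 1)‖ ^ 2)
          + (2 * q + q ^ 2 * (‖Nx‖ ^ 2 / s)) *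
            ‖fderiv ℝ (gradient u) x Nx‖ ^ 2 / s) := by
    rw [hsum, hHf]
    rw [h1]
    rw [mul_pow, h3, show s ^ (q/2) * (q * s ^ (q/2-1)) = q * (s^(q/2) * s^(q/2-1)) by ring, h2]
    field_simp
  refine ⟨main, fun hq => ?_⟩
  rw [main]
  have hsq : 0 < s ^ q := Real.rpow_pos_of_pos hs q
  have hextra : 0 ≤ (2 * q + q ^ 2 * (‖Nx‖ ^ 2 / s)) *
      ‖fderiv ℝ (gradient u) x Nx‖ ^ 2 / s := by positivity
  nlinarith [hsq, hextra, mul_nonneg hsq.le hextra]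
end
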